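/- The expected calibration error satisfies E[ECE] ≤ (∑_{j=1}^J w_j·k_j)·√(2πB/N); in particular, if each output bin aggregates at most κ input bins (k_j ≤ κ for all j), then E[ECE] ≤ κ·√(2πB/N), so ECE converges to zero at rate O(√(B/N)). -/

import Mathlib

open MeasureTheory ProbabilityTheory Finset

/-- Empirical estimate of input bin `t`: the average of the `n` samples in that bin. -/
noncomputable def binEst {Ω : Type*} {B n : ℕ} (X : Fin B × Fin n → Ω → ℝ)
    (t : Fin B) (ω : Ω) : ℝ :=
  (n : ℝ)⁻¹ * ∑ s : Fin n, X (t, s) ω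

/-- Weighted average of the values `v t` over the input bins mapped to output bin `j`. -/
noncomputable def binAvg {B J : ℕ} (g : Fin B → Fin J) (α : Fin B → ℝ)
    (v : Fin B → ℝ) (j : Fin J) : ℝ :=
  (∑ t ∈ univ.filter (fun t => g t = j), α t * v t) /
    (∑ t ∈ univ.filter (fun t => g t = j), α t)

/-!
Each `binEst X t` is the mean of `n` pairwise independent `[0,1]`-valued variables with mean `θ t`,
so by Popoviciu's inequality and additivity of variance its variance is at most `1/(4n)`, and
`E|θ t - binEst X t| ≤ √Var ≤ √(1/(4n)) ≤ √(2π/n)`. A weighted average with nonnegative weights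
moves by at most the sum of the moves of its entries, so `|o_j - e_j|` is bounded by the sum of
`|θ t - binEst X t|` over the `k_j` input bins of output bin `j`; integrating and summing with
the weights `w j` gives the first bound, and `∑ w j k_j ≤ κ` the second.
-/

section Moments

variable {Ω : Type*} [MeasurableSpace Ω] {μ : Measure Ω} [IsProbabilityMeasure μ]

lemma integral_abs_sub_integral_le_sqrt_variance {X : Ω → ℝ} (hX : MemLp X 2 μ) :
    ∫ ω, |X ω - μ[X]| ∂μ ≤ √(Var[X; μ]) := by
  have hY : MemLp (fun ω => |X ω - μ[X]|) 2 μ := (hX.sub (memLp_const _)).abs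
  have hsq : (fun ω => |X ω - μ[X]|) ^ 2 = fun ω => (X ω - μ[X]) ^ 2 := by
    ext ω; simp
  -- Jensen for the square, in the form `0 ≤ Var |X - E X|`.
  have h := variance_nonneg (fun ω => |X ω - μ[X]|) μ
  rw [variance_eq_sub hY, hsq, ← variance_eq_integral hX.aemeasurable, sub_nonneg] at h
  exact Real.le_sqrt_of_sq_le h

lemma variance_average_le_of_bounded {ι : Type*} (s : Finset ι) {X : ι → Ω → ℝ} {a b : ℝ}
    (hXm : ∀ i ∈ s, AEMeasurable (X i) μ) (hXb : ∀ i ∈ s, ∀ᵐ ω ∂μ, X i ω ∈ Set.Icc a b)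
    (hind : Set.Pairwise ↑s fun i j => X i ⟂ᵢ[μ] X j) :
    Var[fun ω => (#s : ℝ)⁻¹ * ∑ i ∈ s, X i ω; μ] ≤ ((b - a) / 2) ^ 2 / #s := by
  have hL2 : ∀ i ∈ s, MemLp (X i) 2 μ := fun i hi =>
    memLp_of_bounded (hXb i hi) (hXm i hi).aestronglyMeasurable 2
  have hsum : Var[fun ω => ∑ i ∈ s, X i ω; μ] ≤ #s * ((b - a) / 2) ^ 2 := by
    simp_rw [← Finset.sum_apply, IndepFun.variance_sum hL2 hind]
    simpa using sum_le_card_nsmul s _ _ fun i hi =>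
      variance_le_sq_of_bounded (hXb i hi) (hXm i hi)
  rw [variance_const_mul]
  calc ((#s : ℝ)⁻¹) ^ 2 * Var[fun ω => ∑ i ∈ s, X i ω; μ]
      ≤ ((#s : ℝ)⁻¹) ^ 2 * (#s * ((b - a) / 2) ^ 2) := by gcongr
    _ = ((b - a) / 2) ^ 2 / #s := by
      rcases eq_or_ne (#s : ℝ) 0 with h | h
      · simp [h]
      · field_simp

end Moments

section Binning

variable {Ω : Type*} [MeasurableSpace Ω] {μ : Measure Ω} {B n : ℕ} {X : Fin B × Fin n → Ω → ℝ}

lemma integral_binEst (hn : n ≠ 0) {t : Fin B} {θ : ℝ}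
    (hXi : ∀ s, Integrable (X (t, s)) μ) (hmean : ∀ s, ∫ ω, X (t, s) ω ∂μ = θ) :
    μ[binEst X t] = θ := by
  simp only [binEst]
  rw [integral_const_mul, integral_finsetSum _ fun s _ => hXi s]
  simp only [hmean, sum_const, card_univ, Fintype.card_fin, nsmul_eq_mul]
  field_simp

lemma integral_abs_sub_binEst_le [IsProbabilityMeasure μ] (hn : n ≠ 0) {t : Fin B} {θ : ℝ}
    (hXm : ∀ s, AEMeasurable (X (t, s)) μ) (hX : ∀ s ω, X (t, s) ω ∈ Set.Icc (0 : ℝ) 1)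
    (hind : Pairwise fun s s' => X (t, s) ⟂ᵢ[μ] X (t, s'))
    (hmean : ∀ s, ∫ ω, X (t, s) ω ∂μ = θ) :
    ∫ ω, |θ - binEst X t ω| ∂μ ≤ √(1 / (4 * n)) := by
  have hXL : ∀ s p, MemLp (X (t, s)) p μ := fun s =>
    memLp_of_bounded (ae_of_all _ (hX s)) (hXm s).aestronglyMeasurable
  have hvar : Var[binEst X t; μ] ≤ 1 / (4 * n) := by
    have := variance_average_le_of_bounded univ (fun s _ => hXm s)
      (fun s _ => ae_of_all _ (hX s)) (fun s _ s' _ h => hind h)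
    simp only [card_univ, Fintype.card_fin] at this
    exact this.trans_eq (by ring)
  calc ∫ ω, |θ - binEst X t ω| ∂μ = ∫ ω, |binEst X t ω - μ[binEst X t]| ∂μ := by
        simp_rw [integral_binEst hn (fun s => (hXL s 1).integrable le_rfl) hmean, abs_sub_comm]
    _ ≤ √(Var[binEst X t; μ]) := integral_abs_sub_integral_le_sqrt_variance
          ((memLp_finsetSum univ fun s _ => hXL s 2).const_mul _)
    _ ≤ √(1 / (4 * n)) := Real.sqrt_le_sqrt hvar

end Binning

section Aggregation

variable {B J : ℕ} (g : Fin B → Fin J) {α : Fin B → ℝ}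

lemma abs_binAvg_sub_binAvg_le (hα : ∀ t, 0 ≤ α t) (u v : Fin B → ℝ) (j : Fin J) :
    |binAvg g α u j - binAvg g α v j| ≤ ∑ t ∈ univ.filter (fun t => g t = j), |u t - v t| := by
  set F := univ.filter (fun t => g t = j)
  have hS : 0 ≤ ∑ t ∈ F, α t := sum_nonneg fun t _ => hα t
  rcases hS.eq_or_lt with hS0 | hSpos
  -- a fibre of total weight zero has both averages equal to `x / 0 = 0`
  · simp only [binAvg, F, ← hS0, div_zero, sub_zero, abs_zero]
    exact sum_nonneg fun t _ => abs_nonneg _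
  rw [binAvg, binAvg, div_sub_div_same, ← sum_sub_distrib, abs_div, abs_of_pos hSpos,
    div_le_iff₀ hSpos, sum_mul_sum]
  calc |∑ t ∈ F, (α t * u t - α t * v t)| ≤ ∑ t ∈ F, α t * |u t - v t| := by
        refine (abs_sum_le_sum_abs _ _).trans_eq (sum_congr rfl fun t _ => ?_)
        rw [← mul_sub, abs_mul, abs_of_nonneg (hα t)]
    _ ≤ ∑ t ∈ F, ∑ t' ∈ F, |u t - v t| * α t' :=
        sum_le_sum fun t ht => by
          rw [mul_comm, ← mul_sum]
          exact mul_le_mul_of_nonneg_left (single_le_sum (fun t' _ => hα t') ht) (abs_nonneg _)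

lemma integral_sum_abs_binAvg_sub_le {Ω : Type*} [MeasurableSpace Ω] {μ : Measure Ω}
    (hα : ∀ t, 0 ≤ α t) {w : Fin J → ℝ} (hw : ∀ j, 0 ≤ w j) (θ : Fin B → ℝ)
    {est : Fin B → Ω → ℝ} {c : ℝ} (hint : ∀ t, Integrable (fun ω => |θ t - est t ω|) μ)
    (hc : ∀ t, ∫ ω, |θ t - est t ω| ∂μ ≤ c) :
    ∫ ω, ∑ j, w j * |binAvg g α θ j - binAvg g α (fun t => est t ω) j| ∂μ
      ≤ (∑ j, w j * ((univ.filter (fun t => g t = j)).card : ℝ)) * c := by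
  have hint_sum : ∀ j, Integrable
      (fun ω => ∑ t ∈ univ.filter (fun t => g t = j), |θ t - est t ω|) μ := fun j =>
    integrable_finsetSum _ fun t _ => hint t
  calc ∫ ω, ∑ j, w j * |binAvg g α θ j - binAvg g α (fun t => est t ω) j| ∂μ
      ≤ ∫ ω, ∑ j, w j * ∑ t ∈ univ.filter (fun t => g t = j), |θ t - est t ω| ∂μ := by
        refine integral_mono_of_nonneg (ae_of_all _ fun ω => ?_)
          (integrable_finsetSum _ fun j _ => (hint_sum j).const_mul _) (ae_of_all _ fun ω => ?_)
        · exact sum_nonneg fun j _ => mul_nonneg (hw j) (abs_nonneg _)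
        · exact sum_le_sum fun j _ =>
            mul_le_mul_of_nonneg_left (abs_binAvg_sub_binAvg_le g hα _ _ j) (hw j)
    _ = ∑ j, w j * ∑ t ∈ univ.filter (fun t => g t = j), ∫ ω, |θ t - est t ω| ∂μ := by
        rw [integral_finsetSum _ fun j _ => (hint_sum j).const_mul _]
        refine sum_congr rfl fun j _ => ?_
        rw [integral_const_mul, integral_finsetSum _ fun t _ => hint t]
    _ ≤ ∑ j, w j * ((univ.filter (fun t => g t = j)).card * c) := by
        gcongr with j _
        · exact hw j
        · simpa using sum_le_card_nsmul _ _ _ fun t _ => hc t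
    _ = (∑ j, w j * ((univ.filter (fun t => g t = j)).card : ℝ)) * c := by
        rw [sum_mul]
        exact sum_congr rfl fun j _ => by ring

end Aggregation

theorem expected_ECE_bound_general
    {Ω : Type*} [MeasurableSpace Ω] (μ : Measure Ω) [IsProbabilityMeasure μ]
    (B n : ℕ) (hn : 1 ≤ n)
    (θ : Fin B → ℝ)
    (X : Fin B × Fin n → Ω → ℝ)
    (hX01 : ∀ p ω, X p ω = 0 ∨ X p ω = 1)
    (hXmeas : ∀ p, Measurable (X p))
    (hindep : iIndepFun X μ)
    (hmean : ∀ t s, ∫ ω, X (t, s) ω ∂μ = θ t)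
    (J : ℕ) (g : Fin B → Fin J)
    (α : Fin B → ℝ) (hα : ∀ t, 0 < α t)
    (w : Fin J → ℝ) (hw0 : ∀ j, 0 ≤ w j) (hw1 : ∑ j : Fin J, w j = 1) :
    (∫ ω, ∑ j : Fin J, w j * |binAvg g α θ j - binAvg g α (fun t => binEst X t ω) j| ∂μ
        ≤ (∑ j : Fin J, w j * ((univ.filter (fun t => g t = j)).card : ℝ)) *
            Real.sqrt (2 * Real.pi * B / (n * B : ℝ))) ∧
    ∀ κ : ℝ, (∀ j : Fin J, ((univ.filter (fun t => g t = j)).card : ℝ) ≤ κ) →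
      ∫ ω, ∑ j : Fin J, w j * |binAvg g α θ j - binAvg g α (fun t => binEst X t ω) j| ∂μ
        ≤ κ * Real.sqrt (2 * Real.pi * B / (n * B : ℝ)) := by
  have hX : ∀ p ω, X p ω ∈ Set.Icc (0 : ℝ) 1 := fun p ω => by
    rcases hX01 p ω with h | h <;> simp [h]
  have hXint : ∀ p, Integrable (X p) μ := fun p =>
    (memLp_of_bounded (ae_of_all _ (hX p)) (hXmeas p).aestronglyMeasurable 1).integrable le_rfl
  have hint : ∀ t, Integrable (fun ω => |θ t - binEst X t ω|) μ := fun t =>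
    ((integrable_const _).sub ((integrable_finsetSum _ fun s _ => hXint (t, s)).const_mul _)).abs
  have hbin : ∀ t, ∫ ω, |θ t - binEst X t ω| ∂μ ≤ √(2 * Real.pi * B / (n * B : ℝ)) := by
    intro t
    have hrate : 1 / (4 * n : ℝ) ≤ 2 * Real.pi * B / (n * B) := by
      have hB : (0 : ℝ) < B := by exact_mod_cast t.pos
      rw [div_le_div_iff₀ (by positivity) (by positivity)]
      nlinarith [Real.pi_gt_three, mul_pos hB (show (0 : ℝ) < n by exact_mod_cast hn)]
    exact (integral_abs_sub_binEst_le (by omega) (fun s => (hXmeas _).aemeasurable)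
      (fun s => hX _) (fun s s' h => hindep.indepFun (by simpa using h)) (hmean t)).trans
      (Real.sqrt_le_sqrt hrate)
  have hECE := integral_sum_abs_binAvg_sub_le g (fun t => (hα t).le) hw0 θ hint hbin
  refine ⟨hECE, fun κ hκ => hECE.trans (mul_le_mul_of_nonneg_right ?_ (Real.sqrt_nonneg _))⟩
  calc ∑ j, w j * ((univ.filter (fun t => g t = j)).card : ℝ) ≤ ∑ j, w j * κ := by
        gcongr with j _
        exacts [hw0 j, hκ j]
    _ = κ := by rw [← sum_mul, hw1, one_mul]

/-- **Expected calibration error bound**: with `ECE = ∑_j w_j·|o_j − e_j|` for nonnegative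
weights summing to one, `E[ECE] ≤ (∑_j w_j·k_j)·√(2πB/N)`; in particular, if every output
bin aggregates at most `κ` input bins then `E[ECE] ≤ κ·√(2πB/N)`, i.e. `ECE = O(√(B/N))`. -/
theorem expected_ECE_bound
    {Ω : Type*} [MeasurableSpace Ω] (μ : Measure Ω) [IsProbabilityMeasure μ]
    (B n : ℕ) (hB : 1 ≤ B) (hn : 1 ≤ n)
    (θ : Fin B → ℝ) (hθ : ∀ t, θ t ∈ Set.Icc (0 : ℝ) 1)
    (X : Fin B × Fin n → Ω → ℝ)
    (hX01 : ∀ p ω, X p ω = 0 ∨ X p ω = 1)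
    (hXmeas : ∀ p, Measurable (X p))
    (hindep : iIndepFun X μ)
    (hmean : ∀ t s, ∫ ω, X (t, s) ω ∂μ = θ t)
    (J : ℕ) (g : Fin B → Fin J) (hg : Function.Surjective g)
    (α : Fin B → ℝ) (hα : ∀ t, 0 < α t)
    (w : Fin J → ℝ) (hw0 : ∀ j, 0 ≤ w j) (hw1 : ∑ j : Fin J, w j = 1) :
    (∫ ω, ∑ j : Fin J, w j * |binAvg g α θ j - binAvg g α (fun t => binEst X t ω) j| ∂μ
        ≤ (∑ j : Fin J, w j * ((univ.filter (fun t => g t = j)).card : ℝ)) *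
            Real.sqrt (2 * Real.pi * B / (n * B : ℝ))) ∧
    ∀ κ : ℝ, (∀ j : Fin J, ((univ.filter (fun t => g t = j)).card : ℝ) ≤ κ) →
      ∫ ω, ∑ j : Fin J, w j * |binAvg g α θ j - binAvg g α (fun t => binEst X t ω) j| ∂μ
        ≤ κ * Real.sqrt (2 * Real.pi * B / (n * B : ℝ)) :=
  expected_ECE_bound_general μ B n hn θ X hX01 hXmeas hindep hmean J g α hα w hw0 hw1
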